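/- arXiv:1110.2151 — 3 statements merged into one kernel-verified Lean document; each statement's English description precedes it below -/
import Mathlib

section
/- Let 𝓗 be a Hilbert space, K ⊆ 𝓗 a closed subspace with orthogonal projection P onto K, and (θ_t)_{t∈ℝ} a one-parameter group of unitaries on 𝓗 (θ_s θ_t = θ_{s+t}, θ_0 = 1). Suppose β is a unitary on 𝓗 with β² = 1, β fixes K pointwise, and β θ_t β = θ_{−t} for all t. Then for every t ∈ ℝ and every ξ ∈ K: ‖θ_{2t}(ξ) − ξ‖ ≤ 2‖θ_t(ξ) − P(θ_t(ξ))‖. -/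
/-! β maps `θ_t ξ` to `θ_{-t} ξ`, and `θ_{-t}` carries `θ_{2t} ξ - ξ` to `θ_t ξ - β (θ_t ξ)`. As β is an
isometry fixing `P (θ_t ξ)`, going through that point bounds this by twice the distance from `θ_t ξ`
to `K`. -/

theorem Isometry.dist_apply_le_two_mul_dist_of_apply_eq {α : Type*} [PseudoMetricSpace α]
    {f : α → α} (hf : Isometry f) {p : α} (hp : f p = p) (x : α) :
    dist x (f x) ≤ 2 * dist x p :=
  calc dist x (f x) ≤ dist x p + dist p (f x) := dist_triangle _ _ _
    _ = dist x p + dist (f p) (f x) := by rw [hp]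
    _ = 2 * dist x p := by rw [hf.dist_eq, dist_comm p]; ring

theorem stmt_9_general {𝕜 𝓗 : Type*} [RCLike 𝕜] [NormedAddCommGroup 𝓗]
    [InnerProductSpace 𝕜 𝓗]
    (K : Submodule 𝕜 𝓗) [CompleteSpace K]
    (θ : ℝ → (𝓗 ≃ₗᵢ[𝕜] 𝓗))
    (hgrp : ∀ s t : ℝ, ∀ ξ : 𝓗, θ s (θ t ξ) = θ (s + t) ξ)
    (β : 𝓗 ≃ₗᵢ[𝕜] 𝓗)
    (hβK : ∀ ξ ∈ K, β ξ = ξ)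
    (hβθ : ∀ (t : ℝ) (ξ : 𝓗), β (θ t (β ξ)) = θ (-t) ξ) :
    ∀ (t : ℝ), ∀ ξ ∈ K,
      ‖θ (2 * t) ξ - ξ‖ ≤ 2 * ‖θ t ξ - (K.orthogonalProjection (θ t ξ) : 𝓗)‖ := by
  intro t ξ hξ
  have hshift : θ (-t) (θ (2 * t) ξ) = θ t ξ := by rw [hgrp]; ring_nf
  have hreflect : θ (-t) ξ = β (θ t ξ) := by rw [← hβθ, hβK ξ hξ]
  rw [← dist_eq_norm, ← dist_eq_norm, ← (θ (-t)).dist_map, hshift, hreflect]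
  exact β.isometry.dist_apply_le_two_mul_dist_of_apply_eq
    (hβK _ (Submodule.coe_mem _)) _

theorem stmt_9 {𝕜 𝓗 : Type*} [RCLike 𝕜] [NormedAddCommGroup 𝓗]
    [InnerProductSpace 𝕜 𝓗] [CompleteSpace 𝓗]
    (K : Submodule 𝕜 𝓗) [CompleteSpace K]
    (θ : ℝ → (𝓗 ≃ₗᵢ[𝕜] 𝓗))
    (hgrp : ∀ s t : ℝ, ∀ ξ : 𝓗, θ s (θ t ξ) = θ (s + t) ξ)
    (hzero : ∀ ξ : 𝓗, θ 0 ξ = ξ)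
    (β : 𝓗 ≃ₗᵢ[𝕜] 𝓗)
    (hβ2 : ∀ ξ : 𝓗, β (β ξ) = ξ)
    (hβK : ∀ ξ ∈ K, β ξ = ξ)
    (hβθ : ∀ (t : ℝ) (ξ : 𝓗), β (θ t (β ξ)) = θ (-t) ξ) :
    ∀ (t : ℝ), ∀ ξ ∈ K,
      ‖θ (2 * t) ξ - ξ‖ ≤ 2 * ‖θ t ξ - (K.orthogonalProjection (θ t ξ) : 𝓗)‖ :=
  stmt_9_general K θ hgrp β hβK hβθ
end

section
/- A finitely generated group Γ such that for every nontrivial g ∈ Γ there exists a finite-dimensional complex unitary representation π of Γ with π(g) ≠ 1 is residually finite. -/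
/-!
Mal'cev's argument. A unitary representation `π : Γ → U(n) ⊆ GL_n(ℂ)` of the finitely generated
group `Γ` takes values in `GL_n(R)`, where `R ⊆ ℂ` is the ring generated by the entries of the
images of the generators and of their inverses. As a finitely generated `ℤ`-algebra, `R` is a
reduced Jacobson ring whose residue fields are finite (the Nullstellensatz over `ℤ`). So if
`π g ≠ 1`, a nonzero entry of `π g - 1` survives modulo some maximal ideal `m`, and reduction
modulo `m` maps `Γ` to the finite group `GL_n(R ⧸ m)` without killing `g`.
-/

/-- A group is residually finite if every nontrivial element survives in some
finite quotient, i.e. lies outside a normal subgroup of finite index. -/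
def ResiduallyFinite (G : Type*) [Group G] : Prop :=
  ∀ g : G, g ≠ 1 → ∃ N : Subgroup G, N.Normal ∧ N.FiniteIndex ∧ g ∉ N

theorem residuallyFinite_iff_group_residuallyFinite {G : Type*} [Group G] :
    ResiduallyFinite G ↔ Group.ResiduallyFinite G := by
  rw [Group.residuallyFinite_iff_exists_finiteIndexNormalSubgroup]
  refine forall₂_congr fun g _ => ⟨fun ⟨N, _, _, hg⟩ => ⟨.ofSubgroup N, hg⟩, fun ⟨H, hg⟩ => ?_⟩
  exact ⟨H.toSubgroup, H.isNormal', H.isFiniteIndex', hg⟩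

theorem Group.ResiduallyFinite.of_forall_exists_monoidHom.{v} {G : Type*} [Group G]
    (h : ∀ g : G, g ≠ 1 → ∃ (H : Type v) (_ : Group H) (_ : Group.ResiduallyFinite H)
      (f : G →* H), f g ≠ 1) :
    Group.ResiduallyFinite G := by
  refine Group.residuallyFinite_iff_exists_finiteIndexNormalSubgroup.mpr fun g hg => ?_
  obtain ⟨H, _, _, f, hf⟩ := h g hg
  obtain ⟨K, hK⟩ := Group.exists_finiteIndexNormalSubgroup_notMem (f g) hf
  exact ⟨K.comap f, hK⟩

instance : IsJacobsonRing ℤ := by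
  refine isJacobsonRing_iff_prime_eq.mpr fun P hP => ?_
  by_cases hbot : P = ⊥
  · subst hbot
    refine le_antisymm (fun x hx => ?_) Ideal.le_jacobson
    rw [Ideal.mem_jacobson_bot] at hx
    have h1 := Int.isUnit_iff.mp (hx 1)
    have h2 := Int.isUnit_iff.mp (hx (-1))
    rw [Ideal.mem_bot]
    omega
  · have : P.IsMaximal := hP.isMaximal hbot
    exact Ideal.jacobson_eq_self_of_isMaximal

theorem Field.finite_of_module_finite_int (k : Type*) [Field k] [Module.Finite ℤ k] : Finite k := by
  obtain ⟨p, hp⟩ := CharP.exists k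
  rcases CharP.char_is_prime_or_zero k p with hprime | rfl
  · have : Fact p.Prime := ⟨hprime⟩
    let : Algebra (ZMod p) k := ZMod.algebra k p
    have : Module.Finite (ZMod p) k := .of_restrictScalars_finite ℤ _ _
    exact Module.finite_of_finite (ZMod p)
  · have : CharZero k := CharP.charP_to_charZero k
    have : Algebra.IsIntegral ℤ k := .of_finite ℤ k
    exact absurd (isField_of_isIntegral_of_isField (algebraMap ℤ k).injective_int
      (Field.toIsField k)) Int.not_isField

theorem Ideal.finite_quotient_of_isMaximal {A : Type*} [CommRing A] [Algebra.FiniteType ℤ A]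
    (m : Ideal A) [m.IsMaximal] : Finite (A ⧸ m) := by
  let : Field (A ⧸ m) := Ideal.Quotient.field m
  have : Algebra.FiniteType ℤ (A ⧸ m) :=
    .of_surjective (Ideal.Quotient.mkₐ ℤ m) (Ideal.Quotient.mkₐ_surjective ℤ m)
  have : Module.Finite ℤ (A ⧸ m) := finite_of_finite_type_of_isJacobsonRing ℤ (A ⧸ m)
  exact Field.finite_of_module_finite_int (A ⧸ m)

theorem Ideal.exists_isMaximal_notMem_of_ne_zero {A : Type*} [CommRing A] [IsJacobsonRing A]
    [IsReduced A] {x : A} (hx : x ≠ 0) : ∃ m : Ideal A, m.IsMaximal ∧ x ∉ m := by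
  have hjac : (⊥ : Ideal A).jacobson = ⊥ := by
    rw [← Ideal.radical_eq_jacobson, Ideal.radical_bot_of_isReduced]
  obtain ⟨m, ⟨-, hm⟩, hxm⟩ := Ideal.eq_jacobson_iff_notMem.mp hjac x (by simpa using hx)
  exact ⟨m, hm, hxm⟩

instance Matrix.GeneralLinearGroup.residuallyFinite {n A : Type*} [Fintype n] [DecidableEq n]
    [CommRing A] [IsReduced A] [Algebra.FiniteType ℤ A] : Group.ResiduallyFinite (GL n A) := by
  refine Group.residuallyFinite_of_forall_exists_finite_monoidHom fun M hM => ?_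
  obtain ⟨i, j, hij⟩ : ∃ i j, (M : Matrix n n A) i j ≠ (1 : Matrix n n A) i j := by
    by_contra! h
    exact hM (Units.ext (Matrix.ext h))
  have : IsJacobsonRing A := isJacobsonRing_of_finiteType (A := ℤ)
  obtain ⟨m, hm, hxm⟩ := Ideal.exists_isMaximal_notMem_of_ne_zero (sub_ne_zero.mpr hij)
  have : Finite (A ⧸ m) := m.finite_quotient_of_isMaximal
  refine ⟨GL n (A ⧸ m), inferInstance, inferInstance,
    Units.map (Ideal.Quotient.mk m).mapMatrix.toMonoidHom, fun h => hxm ?_⟩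
  have := congrArg (fun U : GL n (A ⧸ m) => (U : Matrix n n (A ⧸ m)) i j) h
  rw [← Ideal.Quotient.eq]
  simpa [Matrix.one_apply, apply_ite (Ideal.Quotient.mk m)] using this

theorem Units.mem_range_map_of_injective {M N : Type*} [Monoid M] [Monoid N] {f : M →* N}
    (hf : Function.Injective f) {u : Nˣ} (hu : (u : N) ∈ Set.range f)
    (hu' : (↑u⁻¹ : N) ∈ Set.range f) :
    u ∈ (Units.map f).range := by
  obtain ⟨a, ha⟩ := hu
  obtain ⟨b, hb⟩ := hu'
  have hab : a * b = 1 := hf (by simp [ha, hb])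
  have hba : b * a = 1 := hf (by simp [ha, hb])
  exact ⟨⟨a, b, hab, hba⟩, Units.ext ha⟩

theorem Matrix.mem_range_mapMatrix_val_iff {n S K : Type*} [Fintype n] [DecidableEq n]
    [CommSemiring S] [Semiring K] [Algebra S K] {R : Subalgebra S K} {M : Matrix n n K} :
    M ∈ Set.range R.val.mapMatrix ↔ ∀ i j, M i j ∈ R := by
  constructor
  · rintro ⟨N, rfl⟩ i j
    exact (N i j).2
  · intro h
    exact ⟨Matrix.of fun i j => ⟨M i j, h i j⟩, rfl⟩

theorem Matrix.GeneralLinearGroup.exists_finiteType_lift {Γ K n : Type*} [Group Γ] [CommRing K]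
    [Fintype n] [DecidableEq n] (hΓ : Group.FG Γ) (ρ : Γ →* GL n K) :
    ∃ R : Subalgebra ℤ K, Algebra.FiniteType ℤ R ∧
      ∃ ρ' : Γ →* GL n R, (Units.map R.val.mapMatrix.toMonoidHom).comp ρ' = ρ := by
  obtain ⟨S, hS⟩ := hΓ.out
  let entries (U : GL n K) : Set K := Set.range fun p : n × n => (U : Matrix n n K) p.1 p.2
  let R := Algebra.adjoin ℤ (⋃ s ∈ S, entries (ρ s) ∪ entries (ρ s)⁻¹)
  let ι : GL n R →* GL n K := Units.map R.val.mapMatrix.toMonoidHom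
  have hι : Function.Injective ι :=
    Units.map_injective (Matrix.map_injective Subtype.val_injective)
  have hρ : ∀ γ, ρ γ ∈ ι.range := by
    have : Subgroup.closure (S : Set Γ) ≤ ι.range.comap ρ := by
      refine (Subgroup.closure_le _).mpr fun s hs =>
        Units.mem_range_map_of_injective (Matrix.map_injective Subtype.val_injective) ?_ ?_
      · exact Matrix.mem_range_mapMatrix_val_iff.mpr fun i j =>
          Algebra.subset_adjoin (Set.mem_biUnion hs (Or.inl ⟨(i, j), rfl⟩))
      · exact Matrix.mem_range_mapMatrix_val_iff.mpr fun i j =>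
          Algebra.subset_adjoin (Set.mem_biUnion hs (Or.inr ⟨(i, j), rfl⟩))
    rw [hS] at this
    exact fun γ => this (Subgroup.mem_top γ)
  refine ⟨R, .adjoin_of_finite ?_, (MonoidHom.ofInjective hι).symm.toMonoidHom.comp
    (ρ.codRestrict _ hρ), MonoidHom.ext fun γ => ?_⟩
  · exact S.finite_toSet.biUnion fun s _ => (Set.finite_range _).union (Set.finite_range _)
  · exact MonoidHom.apply_ofInjective_symm hι _

theorem stmt_12 {Γ : Type*} [Group Γ] (hfg : Group.FG Γ)
    (hrep : ∀ g : Γ, g ≠ 1 →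
      ∃ (n : ℕ) (π : Γ →* Matrix.unitaryGroup (Fin n) ℂ), π g ≠ 1) :
    ResiduallyFinite Γ := by
  refine residuallyFinite_iff_group_residuallyFinite.mpr <|
    Group.ResiduallyFinite.of_forall_exists_monoidHom fun g hg => ?_
  obtain ⟨n, π, hπ⟩ := hrep g hg
  obtain ⟨R, _, ρ, hρ⟩ :=
    Matrix.GeneralLinearGroup.exists_finiteType_lift hfg (Unitary.toUnits.comp π)
  refine ⟨GL (Fin n) R, inferInstance, inferInstance, ρ,
    fun h => hπ (Unitary.toUnits_injective ?_)⟩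
  simpa [h] using (DFunLike.congr_fun hρ g).symm
end

section
/- If H is a finitely generated abelian group and Γ is a residually finite group, then the wreath product H ≀ Γ = H^{(Γ)} ⋊ Γ is residually finite. -/
/-- The generalized Bernoulli shift of `Γ` on the product group `I → H`. -/
def bernoulliShift (H : Type*) [Group H] {Γ I : Type*} [Group Γ] [MulAction Γ I] :
    Γ →* MulAut (I → H) where
  toFun g :=
    { toFun := fun η ι => η (g⁻¹ • ι)
      invFun := fun η ι => η (g • ι)
      left_inv := fun η => funext fun ι => by simp
      right_inv := fun η => funext fun ι => by simp
      map_mul' := fun a b => rfl }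
  map_one' := by ext η ι; simp
  map_mul' g h := by ext η ι; simp [mul_smul]

lemma bernoulliShift_support_finite {H Γ I : Type*} [Group H] [Group Γ]
    [MulAction Γ I] {f : I → H} (hf : (Function.mulSupport f).Finite) (g : Γ) :
    (Function.mulSupport (bernoulliShift H g f)).Finite := by
  have : Function.mulSupport (bernoulliShift H g f) =
      (fun ι : I => g⁻¹ • ι) ⁻¹' Function.mulSupport f :=
    Function.mulSupport_comp_eq_preimage f (fun ι : I => g⁻¹ • ι)
  rw [this]
  exact hf.preimage (MulAction.injective (g⁻¹ : Γ)).injOn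

/-- The wreath product `H ≀ Γ = H^{(Γ)} ⋊ Γ`, realized as the subgroup of the
unrestricted wreath product `(Γ → H) ⋊ Γ` consisting of the elements whose
first component is finitely supported. Here `Γ` acts on itself by left
multiplication. -/
def wreathProduct (H Γ : Type*) [Group H] [Group Γ] :
    Subgroup ((Γ → H) ⋊[bernoulliShift H] Γ) where
  carrier := {x | (Function.mulSupport x.left).Finite}
  one_mem' := by simp [Function.mulSupport_one]
  mul_mem' := fun {a b} ha hb => by
    rw [Set.mem_setOf_eq, SemidirectProduct.mul_left]
    exact (ha.union (bernoulliShift_support_finite hb a.right)).subset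
      (Function.mulSupport_mul _ _)
  inv_mem' := fun {a} ha => by
    rw [Set.mem_setOf_eq, SemidirectProduct.inv_left]
    exact bernoulliShift_support_finite (by simpa using ha) _

namespace Group.ResiduallyFinite

@[to_additive]
theorem of_injective {G G' : Type*} [Group G] [Group G'] [ResiduallyFinite G'] {f : G →* G'}
    (hf : Function.Injective f) : ResiduallyFinite G := by
  refine residuallyFinite_iff_exists_finiteIndexNormalSubgroup.mpr fun g hg => ?_
  obtain ⟨N, hN⟩ := exists_finiteIndexNormalSubgroup_notMem (f g) ((map_ne_one_iff f hf).mpr hg)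
  exact ⟨N.comap f, hN⟩

@[to_additive]
instance pi {ι : Type*} {G : ι → Type*} [∀ i, Group (G i)] [∀ i, ResiduallyFinite (G i)] :
    ResiduallyFinite (∀ i, G i) := by
  refine residuallyFinite_iff_exists_finiteIndexNormalSubgroup.mpr fun g hg => ?_
  obtain ⟨i, hi⟩ := Function.ne_iff.mp hg
  obtain ⟨N, hN⟩ := exists_finiteIndexNormalSubgroup_notMem (g i) hi
  exact ⟨N.comap (Pi.evalMonoidHom G i), hN⟩

theorem exists_injOn_quotient {G : Type*} [Group G] [ResiduallyFinite G] {T : Set G}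
    (hT : T.Finite) :
    ∃ N : Subgroup G, N.Normal ∧ N.FiniteIndex ∧ Set.InjOn ((↑) : G → G ⧸ N) T := by
  let P := {p : G × G // p ∈ T ×ˢ T ∧ p.1 ≠ p.2}
  have : Finite P := (hT.prod hT).subset (fun _ hp => hp.1) |>.to_subtype
  choose N hN using fun p : P => exists_finiteIndexNormalSubgroup_of_residuallyFinite _ _ p.2.2
  refine ⟨⨅ p, (N p).toSubgroup, Subgroup.normal_iInf_normal fun _ => inferInstance,
    Subgroup.finiteIndex_iInf fun _ => inferInstance, fun a ha b hb hab => ?_⟩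
  by_contra hne
  refine hN ⟨(a, b), ⟨ha, hb⟩, hne⟩ (QuotientGroup.eq.mpr ?_)
  exact Subgroup.mem_iInf.mp (QuotientGroup.eq.mp hab) ⟨(a, b), ⟨ha, hb⟩, hne⟩

end Group.ResiduallyFinite

instance : AddGroup.ResiduallyFinite ℤ := by
  refine AddGroup.residuallyFinite_of_forall_exists_finite_addMonoidHom fun k hk => ?_
  refine ⟨ZMod (k.natAbs + 1), inferInstance, inferInstance, Int.castAddHom _, fun h => hk ?_⟩
  rw [Int.coe_castAddHom, ZMod.intCast_zmod_eq_zero_iff_dvd] at h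
  exact Int.eq_zero_of_dvd_of_natAbs_lt_natAbs h (by omega)

instance CommGroup.residuallyFinite_of_fg {H : Type*} [CommGroup H] [Group.FG H] :
    Group.ResiduallyFinite H := by
  obtain ⟨n, ι, _, p, hp, e, ⟨eqv⟩⟩ := AddCommGroup.equiv_free_prod_directSum_zmod (Additive H)
  have : ∀ i, NeZero (p i ^ e i) := fun i => ⟨pow_ne_zero _ (hp i).ne_zero⟩
  have : Finite (DirectSum ι fun i => ZMod (p i ^ e i)) :=
    .of_equiv _ DFinsupp.equivFunOnFintype.symm
  have : AddGroup.ResiduallyFinite (Fin n →₀ ℤ) :=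
    .of_injective (f := Finsupp.coeFnAddHom) DFunLike.coe_injective
  refine Group.residuallyFinite_of_forall_exists_finite_monoidHom fun h hh => ?_
  obtain ⟨N, hN⟩ := AddGroup.exists_finiteIndexNormalAddSubgroup_notMem (eqv (.ofMul h))
    (by simpa using hh)
  refine ⟨Multiplicative (_ ⧸ N.toAddSubgroup), inferInstance, inferInstance,
    AddMonoidHom.toMultiplicativeRight ((QuotientAddGroup.mk' _).comp eqv.toAddMonoidHom), ?_⟩
  simpa [QuotientAddGroup.eq_zero_iff, FiniteIndexNormalAddSubgroup.mem_toAddSubgroup_iff]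
    using hN

instance SemidirectProduct.instFinite {N G : Type*} [Group N] [Group G] {φ : G →* MulAut N}
    [Finite N] [Finite G] : Finite (N ⋊[φ] G) :=
  .of_equiv _ SemidirectProduct.equivProd.symm

open Function

section FiberProd

variable {Γ Q A : Type*} [CommGroup A]

noncomputable def fiberProd (ψ : Γ → Q) (u : Γ → A) (q : Q) : A :=
  ∏ᶠ γ ∈ ψ ⁻¹' {q}, u γ

theorem fiberProd_one (ψ : Γ → Q) : fiberProd ψ (1 : Γ → A) = 1 :=
  funext fun _ => finprod_mem_one _

theorem fiberProd_mul (ψ : Γ → Q) {u v : Γ → A} (hu : (mulSupport u).Finite)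
    (hv : (mulSupport v).Finite) : fiberProd ψ (u * v) = fiberProd ψ u * fiberProd ψ v :=
  funext fun _ => finprod_mem_mul_distrib' (hu.subset Set.inter_subset_right)
    (hv.subset Set.inter_subset_right)

theorem fiberProd_apply_of_injOn {ψ : Γ → Q} {u : Γ → A} (hψ : Set.InjOn ψ (mulSupport u))
    {γ : Γ} (hγ : γ ∈ mulSupport u) : fiberProd ψ u (ψ γ) = u γ := by
  rw [fiberProd, finprod_mem_inter_mulSupport_eq _ _ {γ}, finprod_mem_singleton]
  ext x
  simp only [Set.mem_inter_iff, Set.mem_preimage, Set.mem_singleton_iff]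
  exact ⟨fun ⟨h, hx⟩ => ⟨hψ hx hγ h, hx⟩, fun ⟨h, hx⟩ => ⟨congrArg ψ h, hx⟩⟩

theorem fiberProd_bernoulliShift [Group Γ] [Group Q] (ψ : Γ →* Q) (g : Γ) (u : Γ → A) :
    fiberProd ψ (bernoulliShift A g u) = bernoulliShift A (ψ g) (fiberProd ψ u) := by
  funext q
  have : ψ ⁻¹' {q} = (g * ·) '' (ψ ⁻¹' {(ψ g)⁻¹ * q}) := by
    ext γ
    simp [Set.image_mul_left, eq_inv_mul_iff_mul_eq]
  simp only [fiberProd, this, finprod_mem_image (mul_right_injective g).injOn]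
  simp only [Set.mem_preimage, Set.mem_singleton_iff, bernoulliShift, smul_eq_mul,
    MonoidHom.coe_mk, OneHom.coe_mk, MulEquiv.coe_mk, Equiv.coe_fn_mk, inv_mul_cancel_left]
  rfl

end FiberProd

namespace wreathProduct

variable {H Γ A Q : Type*} [Group H] [Group Γ] [CommGroup A] [Group Q]

noncomputable def map (π : H →* A) (ψ : Γ →* Q) :
    wreathProduct H Γ →* (Q → A) ⋊[bernoulliShift A] Q where
  toFun x := ⟨fiberProd ψ (π ∘ x.1.left), ψ x.1.right⟩
  map_one' := SemidirectProduct.ext (by simpa using fiberProd_one ψ) ψ.map_one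
  map_mul' x y := by
    have hfin (z : wreathProduct H Γ) : (mulSupport (π ∘ z.1.left)).Finite :=
      z.2.subset (mulSupport_comp_subset π.map_one _)
    have hπ : π ∘ (x.1.left * bernoulliShift H x.1.right y.1.left) =
        (π ∘ x.1.left) * bernoulliShift A x.1.right (π ∘ y.1.left) :=
      funext fun _ => π.map_mul _ _
    refine SemidirectProduct.ext ?_ (ψ.map_mul _ _)
    simp only [Subgroup.coe_mul, SemidirectProduct.mul_left]
    rw [hπ, fiberProd_mul ψ (hfin x) (bernoulliShift_support_finite (hfin y) _),
      fiberProd_bernoulliShift]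

end wreathProduct

theorem stmt_14 {H Γ : Type*} [CommGroup H] [Group Γ]
    (hfg : Group.FG H) (hΓ : ResiduallyFinite Γ) :
    ResiduallyFinite (wreathProduct H Γ) := by
  rw [residuallyFinite_iff_group_residuallyFinite] at hΓ ⊢
  refine Group.residuallyFinite_iff_exists_finiteIndex.mpr fun x hx => ?_
  by_cases hf : x.1.left = 1
  · have hγ : x.1.right ≠ 1 := fun h => hx (Subtype.ext (SemidirectProduct.ext hf h))
    obtain ⟨N, hN⟩ := Group.exists_finiteIndexNormalSubgroup_notMem _ hγ
    let φ := (QuotientGroup.mk' N.toSubgroup).comp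
      (SemidirectProduct.rightHom.comp (wreathProduct H Γ).subtype)
    exact ⟨φ.ker, inferInstance,
      by simpa [φ, FiniteIndexNormalSubgroup.mem_toSubgroup_iff] using hN⟩
  · obtain ⟨γ, hγ⟩ := Function.ne_iff.mp hf
    obtain ⟨K, hK⟩ := Group.exists_finiteIndexNormalSubgroup_notMem _ hγ
    obtain ⟨M, _, _, hM⟩ := Group.ResiduallyFinite.exists_injOn_quotient x.2
    have hγK : (QuotientGroup.mk' K.toSubgroup ∘ x.1.left) γ ≠ 1 := by
      simpa [FiniteIndexNormalSubgroup.mem_toSubgroup_iff] using hK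
    let φ := wreathProduct.map (QuotientGroup.mk' K.toSubgroup) (QuotientGroup.mk' M)
    refine ⟨φ.ker, inferInstance, fun hφ => hγK ?_⟩
    rw [← fiberProd_apply_of_injOn (hM.mono (mulSupport_comp_subset (map_one _) _)) hγK]
    exact congrFun (congrArg SemidirectProduct.left hφ) _
end
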